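/- The reverse Bessel coefficient matrix C with c_{ij} = (2i-j-1)!/(2^{i-j}(j-1)!(i-j)!) for i ≥ j (0 otherwise) satisfies: after one step of Neville elimination, c^{(2)}_{ij} = c_{ij} − (2i-3)c_{i-1,j} = (2i-j-3)!/(2^{i-j}(j-3)!(i-j)!) for i > j ≥ 3, and c^{(2)}_{ij} = 0 for i > j with j ≤ 2. -/
import Mathlib

/-- Entries of the lower triangular reverse Bessel coefficient matrix. -/
noncomputable def revC (i j : ℕ) : ℝ :=
  if j ≤ i then ((2 * i - j - 1).factorial : ℝ) / (2 ^ (i - j) * (j - 1).factorial * (i - j).factorial)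
  else 0

/-- `revNE k i j` is the `(i,j)` entry of `C^{(k+1)}`, the matrix obtained after `k`
steps of Neville elimination of the reverse Bessel coefficient matrix. -/
noncomputable def revNE : ℕ → ℕ → ℕ → ℝ
  | 0, i, j => revC i j
  | k + 1, i, j =>
      if k + 1 ≤ j ∧ j < i ∧ revNE k (i - 1) (k + 1) ≠ 0 then
        revNE k i j - revNE k i (k + 1) / revNE k (i - 1) (k + 1) * revNE k (i - 1) j
      else revNE k i j

theorem revBessel_NE_first_step (i j : ℕ) (hij : j < i) :
    (3 ≤ j →
        revC i j - ((2 * i - 3 : ℕ) : ℝ) * revC (i - 1) j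
          = ((2 * i - j - 3).factorial : ℝ)
              / (2 ^ (i - j) * (j - 3).factorial * (i - j).factorial)) ∧
      (1 ≤ j → j ≤ 2 → revC i j - ((2 * i - 3 : ℕ) : ℝ) * revC (i - 1) j = 0) := by
  constructor
  · intro h3
    obtain ⟨m, rfl⟩ : ∃ m, j = m + 3 := ⟨j - 3, by omega⟩
    obtain ⟨e, rfl⟩ : ∃ e, i = m + 4 + e := ⟨i - (m + 4), by omega⟩
    simp only [revC, if_pos (show m + 3 ≤ m + 4 + e by omega),
      if_pos (show m + 3 ≤ m + 4 + e - 1 by omega)]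
    rw [show 2 * (m + 4 + e) - (m + 3) - 1 = m + 2*e + 4 by omega,
        show (m + 3) - 1 = m + 2 by omega,
        show (m + 4 + e) - (m + 3) = e + 1 by omega,
        show 2 * (m + 4 + e) - 3 = 2*m + 2*e + 5 by omega,
        show (m + 4 + e) - 1 = m + 3 + e by omega,
        show 2 * (m + 3 + e) - (m + 3) - 1 = m + 2*e + 2 by omega,
        show (m + 3 + e) - (m + 3) = e by omega,
        show 2 * (m + 4 + e) - (m + 3) - 3 = m + 2*e + 2 by omega,
        show (m + 3) - 3 = m by omega,
        show (m + 2*e + 4).factorial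
          = (m + 2*e + 4) * ((m + 2*e + 3) * (m + 2*e + 2).factorial) by
            rw [show m + 2*e + 4 = (m + 2*e + 3) + 1 by ring, Nat.factorial_succ,
                show m + 2*e + 3 = (m + 2*e + 2) + 1 by ring, Nat.factorial_succ],
        show (m + 2).factorial = (m + 2) * ((m + 1) * m.factorial) by
            rw [Nat.factorial_succ, Nat.factorial_succ],
        show (e + 1).factorial = (e + 1) * e.factorial by rw [Nat.factorial_succ]]
    have h1 : ((m + 2*e + 2).factorial : ℝ) ≠ 0 := Nat.cast_ne_zero.2 (Nat.factorial_ne_zero _)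
    have h2 : (m.factorial : ℝ) ≠ 0 := Nat.cast_ne_zero.2 (Nat.factorial_ne_zero _)
    have h3 : (e.factorial : ℝ) ≠ 0 := Nat.cast_ne_zero.2 (Nat.factorial_ne_zero _)
    have h4 : (2 : ℝ) ^ (e + 1) ≠ 0 := by positivity
    have h5 : (2 : ℝ) ^ e ≠ 0 := by positivity
    push_cast
    field_simp
    ring
  · intro h1 h2
    interval_cases j
    · obtain ⟨e, rfl⟩ : ∃ e, i = e + 2 := ⟨i - 2, by omega⟩
      simp only [revC, if_pos (show 1 ≤ e + 2 by omega),
        if_pos (show 1 ≤ e + 2 - 1 by omega)]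
      rw [show 2 * (e + 2) - 1 - 1 = 2*e + 2 by omega,
          show (1:ℕ) - 1 = 0 by omega,
          show (e + 2) - 1 = e + 1 by omega,
          show 2 * (e + 2) - 3 = 2*e + 1 by omega,
          show 2 * (e + 1) - 1 - 1 = 2*e by omega,
          show (e + 1) - 1 = e by omega,
          show 2*e + 2 = (2*e + 1) + 1 by ring]
      rw [Nat.factorial_succ, Nat.factorial_succ, Nat.factorial_zero,
          show (e + 1).factorial = (e + 1) * e.factorial from Nat.factorial_succ e]
      have h3 : ((2*e).factorial : ℝ) ≠ 0 := Nat.cast_ne_zero.2 (Nat.factorial_ne_zero _)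
      have h4 : (e.factorial : ℝ) ≠ 0 := Nat.cast_ne_zero.2 (Nat.factorial_ne_zero _)
      have h5 : (2 : ℝ) ^ e ≠ 0 := by positivity
      push_cast
      field_simp
      ring
    · obtain ⟨e, rfl⟩ : ∃ e, i = e + 3 := ⟨i - 3, by omega⟩
      simp only [revC, if_pos (show 2 ≤ e + 3 by omega),
        if_pos (show 2 ≤ e + 3 - 1 by omega)]
      rw [show 2 * (e + 3) - 2 - 1 = 2*e + 3 by omega,
          show (2:ℕ) - 1 = 1 by omega,
          show (e + 3) - 2 = e + 1 by omega,
          show 2 * (e + 3) - 3 = 2*e + 3 by omega,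
          show (e + 3) - 1 = e + 2 by omega,
          show 2 * (e + 2) - 2 - 1 = 2*e + 1 by omega,
          show (e + 2) - 2 = e by omega,
          show 2*e + 3 = (2*e + 2) + 1 by ring]
      rw [Nat.factorial_succ, show 2*e + 2 = (2*e + 1) + 1 by ring, Nat.factorial_succ,
          Nat.factorial_succ, Nat.factorial_one,
          show (e + 1).factorial = (e + 1) * e.factorial from Nat.factorial_succ e]
      have h3 : ((2*e+1).factorial : ℝ) ≠ 0 := Nat.cast_ne_zero.2 (Nat.factorial_ne_zero _)
      have h4 : (e.factorial : ℝ) ≠ 0 := Nat.cast_ne_zero.2 (Nat.factorial_ne_zero _)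
      have h5 : (2 : ℝ) ^ e ≠ 0 := by positivity
      push_cast
      field_simp
      ring
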